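/- Let B be a weak Hopf *-algebra. Then the commutant B_t' := {b ∈ B : bz = zb for all z ∈ B_t} of B_t in B is an invariant coideal of B, and every invariant coideal of B is contained in B_t'; that is, B_t' is the greatest invariant coideal of B. -/

import Mathlib

open scoped TensorProduct
open TensorProduct

noncomputable section

/-- The conjugate-linear "star" operation on a tensor product of two star modules,
defined via a choice of bases so that `star (x ⊗ y) = star x ⊗ star y`. -/
def tensorStar (M N : Type) [AddCommGroup M] [Module ℂ M] [Module.Finite ℂ M]
    [Module.Free ℂ M] [StarAddMonoid M] [AddCommGroup N] [Module ℂ N] [Module.Finite ℂ N]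
    [Module.Free ℂ N] [StarAddMonoid N] (t : M ⊗[ℂ] N) : M ⊗[ℂ] N :=
  let bM := Module.Free.chooseBasis ℂ M
  let bN := Module.Free.chooseBasis ℂ N
  ∑ p : Module.Free.ChooseBasisIndex ℂ M × Module.Free.ChooseBasisIndex ℂ N,
    (starRingEnd ℂ) (((bM.tensorProduct bN).repr t) p) • (star (bM p.1) ⊗ₜ[ℂ] star (bN p.2))

/-- A weak Hopf `*`-algebra structure on a finite-dimensional `C*`-algebra `B`. -/
structure WHA (B : Type) [NormedRing B] [StarRing B] [CStarRing B] [NormedAlgebra ℂ B]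
    [StarModule ℂ B] [FiniteDimensional ℂ B] where
  Δ : B →ₗ[ℂ] B ⊗[ℂ] B
  ε : B →ₗ[ℂ] ℂ
  S : B →ₗ[ℂ] B
  coassoc : ∀ b : B, (TensorProduct.assoc ℂ B B B) ((TensorProduct.map Δ LinearMap.id) (Δ b)) =
    (TensorProduct.map LinearMap.id Δ) (Δ b)
  counit_left : ∀ b : B, (TensorProduct.lid ℂ B) ((TensorProduct.map ε LinearMap.id) (Δ b)) = b
  counit_right : ∀ b : B, (TensorProduct.rid ℂ B) ((TensorProduct.map LinearMap.id ε) (Δ b)) = b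
  comul_mul : ∀ a b : B, Δ (a * b) = Δ a * Δ b
  weak_counit : ∀ b c d : B, (TensorProduct.lid ℂ ℂ)
      ((TensorProduct.map (ε ∘ₗ LinearMap.mulLeft ℂ b) (ε ∘ₗ LinearMap.mulRight ℂ d)) (Δ c)) =
    ε (b * c * d)
  weak_comul_one : (TensorProduct.map Δ LinearMap.id) (Δ 1) =
    (Δ 1 ⊗ₜ[ℂ] (1 : B)) * ((TensorProduct.assoc ℂ B B B).symm ((1 : B) ⊗ₜ[ℂ] Δ 1))
  comul_star : ∀ b : B, Δ (star b) = tensorStar B B (Δ b)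
  antipode_mul : ∀ a b : B, S (a * b) = S b * S a
  antipode_one : S 1 = 1
  antipode_comul : ∀ b : B, Δ (S b) =
    (TensorProduct.map S S) ((TensorProduct.comm ℂ B B) (Δ b))
  counit_antipode : ∀ b : B, ε (S b) = ε b
  antipode_left : ∀ b : B, LinearMap.mul' ℂ B ((TensorProduct.map LinearMap.id S) (Δ b)) =
    (TensorProduct.lid ℂ B) ((TensorProduct.map ε LinearMap.id) (Δ 1 * (b ⊗ₜ[ℂ] (1 : B))))
  antipode_right : ∀ b : B, LinearMap.mul' ℂ B ((TensorProduct.map S LinearMap.id) (Δ b)) =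
    (TensorProduct.rid ℂ B) ((TensorProduct.map LinearMap.id ε) (((1 : B) ⊗ₜ[ℂ] b) * Δ 1))

namespace WHA

variable {B : Type} [NormedRing B] [StarRing B] [CStarRing B] [NormedAlgebra ℂ B]
  [StarModule ℂ B] [FiniteDimensional ℂ B]

/-- The target counital map `ε_t(b) = (ε ⊗ id)(Δ(1)(b ⊗ 1))`. -/
def εt (W : WHA B) (b : B) : B :=
  (TensorProduct.lid ℂ B) ((TensorProduct.map W.ε LinearMap.id) (W.Δ 1 * (b ⊗ₜ[ℂ] (1 : B))))

/-- The source counital map `ε_s(b) = (id ⊗ ε)((1 ⊗ b)Δ(1))`. -/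
def εs (W : WHA B) (b : B) : B :=
  (TensorProduct.rid ℂ B) ((TensorProduct.map LinearMap.id W.ε) (((1 : B) ⊗ₜ[ℂ] b) * W.Δ 1))

/-- The target counital subalgebra `B_t = ε_t(B)`. -/
def Bt (W : WHA B) : Submodule ℂ B := Submodule.span ℂ (Set.range W.εt)

/-- The source counital subalgebra `B_s = ε_s(B)`. -/
def Bs (W : WHA B) : Submodule ℂ B := Submodule.span ℂ (Set.range W.εs)

/-- The right adjoint action `b ◁ x = S(x₍₁₎) b x₍₂₎`. -/
def ad (W : WHA B) (b x : B) : B :=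
  LinearMap.mul' ℂ B ((TensorProduct.map W.S (LinearMap.mulLeft ℂ b)) (W.Δ x))

/-- `I` is a (right) coideal of `B`: a unital `*`-subalgebra with `Δ(I) ⊆ I ⊗ B`. -/
def IsCoideal (W : WHA B) (I : Submodule ℂ B) : Prop :=
  (1 : B) ∈ I ∧ (∀ a ∈ I, ∀ b ∈ I, a * b ∈ I) ∧ (∀ a ∈ I, star a ∈ I) ∧
    ∀ a ∈ I, W.Δ a ∈ Submodule.span ℂ {x : B ⊗[ℂ] B | ∃ u ∈ I, ∃ v : B, x = u ⊗ₜ[ℂ] v}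

/-- A coideal is invariant if `span{ b ◁ x : b ∈ I, x ∈ B } = I`. -/
def IsInvariant (W : WHA B) (I : Submodule ℂ B) : Prop :=
  Submodule.span ℂ {y : B | ∃ b ∈ I, ∃ x : B, y = W.ad b x} = I

end WHA

/-- A morphism of weak Hopf `*`-algebras. -/
structure WHAHom {B C : Type} [NormedRing B] [StarRing B] [CStarRing B] [NormedAlgebra ℂ B]
    [StarModule ℂ B] [FiniteDimensional ℂ B] [NormedRing C] [StarRing C] [CStarRing C]
    [NormedAlgebra ℂ C] [StarModule ℂ C] [FiniteDimensional ℂ C]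
    (W : WHA B) (W' : WHA C) where
  π : B →⋆ₐ[ℂ] C
  comul_comp : ∀ b : B, W'.Δ (π b) = (TensorProduct.map π.toLinearMap π.toLinearMap) (W.Δ b)
  antipode_comp : ∀ b : B, W'.S (π b) = π (W.S b)
  counit_comp : ∀ b : B, W'.ε (π b) = W.ε b



/-!
Write `B_t'` for the commutant of `B_t`. It is a unital subalgebra, and it is `*`-closed because
`B_t` is: `Δ(z) = (z ⊗ 1)Δ(1) = Δ(1)(z ⊗ 1)` for `z ∈ B_t`, and the counit recovers `z*` from
`Δ(z*) = Δ(1)(z* ⊗ 1)` as `ε_t(z*)`. The same two formulas show that `Δ(b)` commutes with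
`B_t ⊗ 1` for `b ∈ B_t'`, and the centralizer of `B_t ⊗ 1` in `B ⊗ B` is `B_t' ⊗ B`.

The adjoint action always lands in `B_t'`: since `b ◁ x = (b ◁ x) ◁ 1 = S(1₍₁₎)(b ◁ x)1₍₂₎`, it
suffices that `z S(1₍₁₎) ⊗ 1₍₂₎ = S(1₍₁₎) ⊗ 1₍₂₎ z` for `z ∈ B_t`. This follows from
`B_t = S(B_s)` and `Δ(1)(y ⊗ 1) = Δ(1)(1 ⊗ S(y))` for `y ∈ B_s`. Conversely `b ◁ 1 = b` for
`b ∈ B_t'`, because the second leg of `Δ(1)` lies in `B_t`. So `B_t'` is invariant, and an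
invariant `J` equals `span (J ◁ B) ⊆ B_t'`.
-/

theorem tensorStar_eq_star {M N : Type} [AddCommGroup M] [Module ℂ M] [Module.Finite ℂ M]
    [Module.Free ℂ M] [StarAddMonoid M] [StarModule ℂ M] [AddCommGroup N] [Module ℂ N]
    [Module.Finite ℂ N] [Module.Free ℂ N] [StarAddMonoid N] [StarModule ℂ N]
    (t : M ⊗[ℂ] N) : tensorStar M N t = star t := by
  let b := (Module.Free.chooseBasis ℂ M).tensorProduct (Module.Free.chooseBasis ℂ N)
  conv_rhs => rw [← b.sum_repr t]
  simp only [tensorStar, b, star_sum, star_smul, Module.Basis.tensorProduct_apply', star_tmul,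
    starRingEnd_apply]

theorem TensorProduct.star_assoc_symm {R M N P : Type*} [CommSemiring R] [StarRing R]
    [AddCommMonoid M] [StarAddMonoid M] [Module R M] [StarModule R M]
    [AddCommMonoid N] [StarAddMonoid N] [Module R N] [StarModule R N]
    [AddCommMonoid P] [StarAddMonoid P] [Module R P] [StarModule R P]
    (x : M ⊗[R] (N ⊗[R] P)) :
    star ((TensorProduct.assoc R M N P).symm x) = (TensorProduct.assoc R M N P).symm (star x) := by
  induction x with
  | zero => simp
  | tmul _ n =>
    induction n with
    | zero => simp
    | tmul => simp
    | add _ _ h₁ h₂ => simp_all [tmul_add]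
  | add _ _ h₁ h₂ => simp_all

theorem TensorProduct.apply_lid_map {R M N P : Type*} [CommSemiring R] [AddCommMonoid M]
    [Module R M] [AddCommMonoid N] [Module R N] [AddCommMonoid P] [Module R P]
    (φ : M →ₗ[R] R) (f : N →ₗ[R] P) (t : M ⊗[R] N) :
    f (TensorProduct.lid R N (map φ LinearMap.id t)) = TensorProduct.lid R P (map φ f t) := by
  induction t with
  | zero => simp
  | tmul => simp
  | add _ _ h₁ h₂ => simp_all

theorem TensorProduct.apply_rid_map {R M N P : Type*} [CommSemiring R] [AddCommMonoid M]
    [Module R M] [AddCommMonoid N] [Module R N] [AddCommMonoid P] [Module R P]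
    (f : M →ₗ[R] P) (φ : N →ₗ[R] R) (t : M ⊗[R] N) :
    f (TensorProduct.rid R M (map LinearMap.id φ t)) = TensorProduct.rid R P (map f φ t) := by
  induction t with
  | zero => simp
  | tmul => simp
  | add _ _ h₁ h₂ => simp_all

section Sandwich

variable {R A : Type*} [CommSemiring R] [Semiring A] [Algebra R A]

def sandwich (a : A) : A ⊗[R] A →ₗ[R] A :=
  LinearMap.mul' R A ∘ₗ map LinearMap.id (LinearMap.mulLeft R a)

@[simp]
theorem sandwich_tmul (a x y : A) : sandwich (R := R) a (x ⊗ₜ y) = x * (a * y) := rfl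

theorem mul_sandwich (a z : A) (t : A ⊗[R] A) :
    z * sandwich a t = sandwich a ((z ⊗ₜ 1) * t) := by
  induction t with
  | zero => simp
  | tmul => simp [mul_assoc]
  | add _ _ h₁ h₂ => simp_all [mul_add]

theorem sandwich_mul (a z : A) (t : A ⊗[R] A) :
    sandwich a t * z = sandwich a (t * (1 ⊗ₜ z)) := by
  induction t with
  | zero => simp
  | tmul => simp [mul_assoc]
  | add _ _ h₁ h₂ => simp_all [add_mul]

end Sandwich

theorem TensorProduct.mem_span_tmul_centralizer {R A C : Type*} [CommSemiring R] [Semiring A]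
    [Algebra R A] [Semiring C] [Algebra R C] [Module.Free R C] (S : Set A) (t : A ⊗[R] C)
    (ht : ∀ s ∈ S, (s ⊗ₜ 1) * t = t * (s ⊗ₜ 1)) :
    t ∈ Submodule.span R
      {x | ∃ u ∈ Subalgebra.centralizer R S, ∃ v : C, x = u ⊗ₜ v} := by
  have hmem : t ∈ Subalgebra.centralizer R (Algebra.TensorProduct.includeLeft (S := R) '' S) := by
    rw [Subalgebra.mem_centralizer_iff]
    rintro _ ⟨s, hs, rfl⟩
    exact ht s hs
  rw [Subalgebra.centralizer_coe_image_includeLeft_eq_center_tensorProduct] at hmem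
  obtain ⟨w, rfl⟩ := hmem
  clear ht
  induction w with
  | zero => simp
  | tmul u v => exact Submodule.subset_span ⟨u, u.2, v, rfl⟩
  | add _ _ h₁ h₂ => rw [map_add]; exact add_mem h₁ h₂

section Contraction

variable {R A : Type*} [CommSemiring R] [Semiring A] [Algebra R A] (φ : A →ₗ[R] R)

theorem TensorProduct.lid_map_assoc_tmul_one_mul (s t : A ⊗[R] A) :
    TensorProduct.lid R (A ⊗[R] A) (map φ LinearMap.id (TensorProduct.assoc R A A A
      ((s ⊗ₜ (1 : A)) * (TensorProduct.assoc R A A A).symm ((1 : A) ⊗ₜ t)))) =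
      (TensorProduct.lid R A (map φ LinearMap.id s) ⊗ₜ (1 : A)) * t := by
  induction s with
  | zero => simp
  | tmul =>
    induction t with
    | zero => simp
    | tmul => simp [smul_tmul']
    | add _ _ h₁ h₂ => simp_all [mul_add, tmul_add]
  | add _ _ h₁ h₂ => simp_all [add_mul, add_tmul]

theorem TensorProduct.rid_map_assoc_symm_mul_tmul_one (s t : A ⊗[R] A) :
    TensorProduct.rid R (A ⊗[R] A) (map LinearMap.id φ
      ((TensorProduct.assoc R A A A).symm ((1 : A) ⊗ₜ t) * (s ⊗ₜ (1 : A)))) =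
      ((1 : A) ⊗ₜ TensorProduct.rid R A (map LinearMap.id φ t)) * s := by
  induction t with
  | zero => simp
  | tmul => simp
  | add _ _ h₁ h₂ => simp_all [add_mul, tmul_add]

end Contraction

namespace WHA

variable {B : Type} [NormedRing B] [StarRing B] [CStarRing B] [NormedAlgebra ℂ B]
  [StarModule ℂ B] [FiniteDimensional ℂ B] (W : WHA B)

theorem comul_one_mul (b : B) : W.Δ 1 * W.Δ b = W.Δ b := by rw [← W.comul_mul, one_mul]

theorem comul_mul_comul_one (b : B) : W.Δ b * W.Δ 1 = W.Δ b := by rw [← W.comul_mul, mul_one]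

theorem map_comul_id_mul (s t : B ⊗[ℂ] B) :
    map W.Δ LinearMap.id (s * t) = map W.Δ LinearMap.id s * map W.Δ LinearMap.id t := by
  induction s with
  | zero => simp
  | tmul =>
    induction t with
    | zero => simp
    | tmul => simp [W.comul_mul]
    | add _ _ h₁ h₂ => simp_all [mul_add]
  | add _ _ h₁ h₂ => simp_all [add_mul]

theorem comul_star_eq (b : B) : W.Δ (star b) = star (W.Δ b) :=
  (W.comul_star b).trans (tensorStar_eq_star _)

theorem star_comul_one : star (W.Δ 1) = W.Δ 1 := by
  rw [← W.comul_star_eq, star_one]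

theorem star_map_comul_id (t : B ⊗[ℂ] B) :
    star (map W.Δ LinearMap.id t) = map W.Δ LinearMap.id (star t) := by
  induction t with
  | zero => simp
  | tmul => simp [W.comul_star_eq]
  | add _ _ h₁ h₂ => simp_all

theorem weak_comul_one' : map W.Δ LinearMap.id (W.Δ 1) =
    (TensorProduct.assoc ℂ B B B).symm ((1 : B) ⊗ₜ W.Δ 1) * (W.Δ 1 ⊗ₜ (1 : B)) := by
  have h := congrArg star W.weak_comul_one
  rwa [W.star_map_comul_id, W.star_comul_one, star_mul, TensorProduct.star_assoc_symm, star_tmul,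
    star_tmul, star_one, W.star_comul_one] at h

def εtₗ : B →ₗ[ℂ] B :=
  (TensorProduct.lid ℂ B).toLinearMap ∘ₗ map W.ε LinearMap.id ∘ₗ
    LinearMap.mulLeft ℂ (W.Δ 1) ∘ₗ (TensorProduct.mk ℂ B B).flip 1

theorem εtₗ_apply (b : B) : W.εtₗ b = W.εt b := rfl

def εsₗ : B →ₗ[ℂ] B :=
  (TensorProduct.rid ℂ B).toLinearMap ∘ₗ map LinearMap.id W.ε ∘ₗ
    LinearMap.mulRight ℂ (W.Δ 1) ∘ₗ TensorProduct.mk ℂ B B 1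

theorem εsₗ_apply (b : B) : W.εsₗ b = W.εs b := rfl

theorem mem_Bt_iff {z : B} : z ∈ W.Bt ↔ ∃ c, W.εt c = z := by
  rw [Bt, show Set.range W.εt = Set.range W.εtₗ from rfl, ← LinearMap.coe_range,
    Submodule.span_eq]
  rfl

theorem εt_eq_lid_map (c : B) :
    W.εt c = TensorProduct.lid ℂ B (map (W.ε ∘ₗ LinearMap.mulRight ℂ c) LinearMap.id (W.Δ 1)) := by
  rw [εt]
  induction W.Δ 1 with
  | zero => simp
  | tmul => simp
  | add _ _ h₁ h₂ => simp_all [add_mul]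

theorem εs_eq_rid_map (c : B) :
    W.εs c = TensorProduct.rid ℂ B (map LinearMap.id (W.ε ∘ₗ LinearMap.mulLeft ℂ c) (W.Δ 1)) := by
  rw [εs]
  induction W.Δ 1 with
  | zero => simp
  | tmul => simp
  | add _ _ h₁ h₂ => simp_all [mul_add]

theorem εs_one : W.εs 1 = 1 := by
  rw [εs, ← Algebra.TensorProduct.one_def, one_mul, W.counit_right]

def counitMid : (B ⊗[ℂ] B) ⊗[ℂ] B →ₗ[ℂ] B ⊗[ℂ] B :=
  map ((TensorProduct.rid ℂ B).toLinearMap ∘ₗ map LinearMap.id W.ε) LinearMap.id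

theorem counitMid_map_comul (t : B ⊗[ℂ] B) : W.counitMid (map W.Δ LinearMap.id t) = t := by
  induction t with
  | zero => simp
  | tmul => simp [counitMid, W.counit_right]
  | add _ _ h₁ h₂ => simp_all

theorem counitMid_comul_one_mul (s : B ⊗[ℂ] B) :
    W.counitMid ((TensorProduct.assoc ℂ B B B).symm ((1 : B) ⊗ₜ W.Δ 1) * (s ⊗ₜ (1 : B))) =
      map LinearMap.id W.εtₗ s := by
  induction s with
  | zero => simp
  | tmul x y =>
    suffices ∀ t : B ⊗[ℂ] B, W.counitMid ((TensorProduct.assoc ℂ B B B).symm ((1 : B) ⊗ₜ t) *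
        ((x ⊗ₜ y) ⊗ₜ (1 : B))) = x ⊗ₜ TensorProduct.lid ℂ B (map W.ε LinearMap.id (t * (y ⊗ₜ 1)))
      from this _
    intro t
    induction t with
    | zero => simp
    | tmul => simp [counitMid, smul_tmul']
    | add _ _ h₁ h₂ => simp_all [add_mul, tmul_add]
  | add _ _ h₁ h₂ => simp_all [add_tmul, mul_add]

theorem counitMid_mul_comul_one (t : B ⊗[ℂ] B) :
    W.counitMid ((TensorProduct.assoc ℂ B B B).symm ((1 : B) ⊗ₜ t) * (W.Δ 1 ⊗ₜ (1 : B))) =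
      map W.εsₗ LinearMap.id t := by
  induction t with
  | zero => simp
  | tmul => simp [counitMid, εsₗ_apply, εs]
  | add _ _ h₁ h₂ => simp_all [add_mul, tmul_add]

-- Both sides are `(id ⊗ ε ⊗ id)` of `(1 ⊗ Δ(1))(Δ(b) ⊗ 1) = (Δ ⊗ id)(Δ(1)(b ⊗ 1))`.
theorem map_εt_comul (b : B) :
    map LinearMap.id W.εtₗ (W.Δ b) = W.Δ 1 * (b ⊗ₜ (1 : B)) := by
  have h : (TensorProduct.assoc ℂ B B B).symm ((1 : B) ⊗ₜ W.Δ 1) * (W.Δ b ⊗ₜ (1 : B)) =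
      map W.Δ LinearMap.id (W.Δ 1 * (b ⊗ₜ 1)) := by
    rw [W.map_comul_id_mul, W.weak_comul_one', map_tmul, LinearMap.id_apply, mul_assoc,
      Algebra.TensorProduct.tmul_mul_tmul, W.comul_one_mul, one_mul]
  rw [← W.counitMid_comul_one_mul, h, W.counitMid_map_comul]

theorem map_εt_comul_one : map LinearMap.id W.εtₗ (W.Δ 1) = W.Δ 1 := by
  simpa [← Algebra.TensorProduct.one_def] using W.map_εt_comul 1

theorem map_εs_comul_one : map W.εsₗ LinearMap.id (W.Δ 1) = W.Δ 1 := by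
  rw [← W.counitMid_mul_comul_one, ← W.weak_comul_one', W.counitMid_map_comul]

theorem comul_εt (c : B) : W.Δ (W.εt c) = (W.εt c ⊗ₜ (1 : B)) * W.Δ 1 := by
  have h : map (W.ε ∘ₗ LinearMap.mulRight ℂ c) W.Δ (W.Δ 1) =
      map (W.ε ∘ₗ LinearMap.mulRight ℂ c) LinearMap.id (map LinearMap.id W.Δ (W.Δ 1)) := by
    rw [map_map, LinearMap.comp_id, LinearMap.id_comp]
  rw [W.εt_eq_lid_map, TensorProduct.apply_lid_map, h, ← W.coassoc, W.weak_comul_one,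
    TensorProduct.lid_map_assoc_tmul_one_mul]

theorem comul_εs (c : B) : W.Δ (W.εs c) = ((1 : B) ⊗ₜ W.εs c) * W.Δ 1 := by
  have h : map W.Δ (W.ε ∘ₗ LinearMap.mulLeft ℂ c) (W.Δ 1) =
      map LinearMap.id (W.ε ∘ₗ LinearMap.mulLeft ℂ c) (map W.Δ LinearMap.id (W.Δ 1)) := by
    rw [map_map, LinearMap.comp_id, LinearMap.id_comp]
  rw [W.εs_eq_rid_map, TensorProduct.apply_rid_map, h, W.weak_comul_one',
    TensorProduct.rid_map_assoc_symm_mul_tmul_one]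

theorem comul_eq_tmul_one_mul_of_mem_Bt {z : B} (hz : z ∈ W.Bt) :
    W.Δ z = (z ⊗ₜ (1 : B)) * W.Δ 1 := by
  obtain ⟨c, rfl⟩ := W.mem_Bt_iff.1 hz
  exact W.comul_εt c

theorem star_mem_Bt {z : B} (hz : z ∈ W.Bt) : star z ∈ W.Bt := by
  have h : W.Δ (star z) = W.Δ 1 * (star z ⊗ₜ (1 : B)) := by
    rw [W.comul_star_eq, W.comul_eq_tmul_one_mul_of_mem_Bt hz, star_mul, W.star_comul_one,
      star_tmul, star_one]
  exact W.mem_Bt_iff.2 ⟨star z, by rw [εt, ← h, W.counit_left]⟩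

theorem comul_eq_mul_tmul_one_of_mem_Bt {z : B} (hz : z ∈ W.Bt) :
    W.Δ z = W.Δ 1 * (z ⊗ₜ (1 : B)) := by
  apply star_injective
  rw [← W.comul_star_eq, W.comul_eq_tmul_one_mul_of_mem_Bt (W.star_mem_Bt hz), star_mul,
    W.star_comul_one, star_tmul, star_one]

theorem tmul_one_mul_comul_of_mem_centralizer {b z : B}
    (hb : b ∈ Subalgebra.centralizer ℂ (W.Bt : Set B)) (hz : z ∈ W.Bt) :
    (z ⊗ₜ (1 : B)) * W.Δ b = W.Δ b * (z ⊗ₜ (1 : B)) := by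
  calc (z ⊗ₜ (1 : B)) * W.Δ b = W.Δ (z * b) := by
        rw [W.comul_mul, W.comul_eq_tmul_one_mul_of_mem_Bt hz, mul_assoc, W.comul_one_mul]
    _ = W.Δ (b * z) := by rw [(Subalgebra.mem_centralizer_iff ℂ).1 hb z hz]
    _ = W.Δ b * (z ⊗ₜ (1 : B)) := by
        rw [W.comul_mul, W.comul_eq_mul_tmul_one_of_mem_Bt hz, ← mul_assoc, W.comul_mul_comul_one]

theorem εt_eq_mul'_map_antipode (b : B) :
    W.εt b = LinearMap.mul' ℂ B (map LinearMap.id W.S (W.Δ b)) :=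
  (W.antipode_left b).symm

theorem εt_εs_mul (c v : B) : W.εt (W.εs c * v) = W.εt v * W.S (W.εs c) := by
  have h : ∀ t : B ⊗[ℂ] B, LinearMap.mul' ℂ B (map LinearMap.id W.S (((1 : B) ⊗ₜ W.εs c) * t)) =
      LinearMap.mul' ℂ B (map LinearMap.id W.S t) * W.S (W.εs c) := by
    intro t
    induction t with
    | zero => simp
    | tmul => simp [W.antipode_mul, mul_assoc]
    | add _ _ h₁ h₂ => simp_all [mul_add, add_mul]
  rw [W.εt_eq_mul'_map_antipode, W.comul_mul, W.comul_εs, mul_assoc, W.comul_one_mul, h,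
    ← W.εt_eq_mul'_map_antipode]

theorem comul_one_mul_εs_tmul_one (c : B) :
    W.Δ 1 * (W.εs c ⊗ₜ (1 : B)) = W.Δ 1 * ((1 : B) ⊗ₜ W.S (W.εs c)) := by
  have h : ∀ t : B ⊗[ℂ] B, map LinearMap.id W.εtₗ (((1 : B) ⊗ₜ W.εs c) * t) =
      map LinearMap.id W.εtₗ t * ((1 : B) ⊗ₜ W.S (W.εs c)) := by
    intro t
    induction t with
    | zero => simp
    | tmul => simp [εtₗ_apply, W.εt_εs_mul]
    | add _ _ h₁ h₂ => simp_all [mul_add, add_mul]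
  rw [← W.map_εt_comul, W.comul_εs, h, W.map_εt_comul_one]

-- `Δ(1) = S(1₍₂₎) ⊗ S(ε_s(1₍₁₎))`, so `ε_t(c) = ε(1₍₁₎c)1₍₂₎ = S(ε_s(ε(S(1₍₂₎)c)1₍₁₎))`.
theorem exists_εt_eq_antipode_εs (c : B) : ∃ d, W.εt c = W.S (W.εs d) := by
  set φ := W.ε ∘ₗ LinearMap.mulRight ℂ c
  have h : ∀ t : B ⊗[ℂ] B, TensorProduct.lid ℂ B
      (map φ LinearMap.id (map W.S W.S (TensorProduct.comm ℂ B B (map W.εsₗ LinearMap.id t)))) =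
      W.S (W.εsₗ (TensorProduct.rid ℂ B (map LinearMap.id (φ ∘ₗ W.S) t))) := by
    intro t
    induction t with
    | zero => simp
    | tmul => simp
    | add _ _ h₁ h₂ => simp_all
  have hΔ : W.Δ 1 = map W.S W.S (TensorProduct.comm ℂ B B (map W.εsₗ LinearMap.id (W.Δ 1))) := by
    conv_lhs => rw [← W.antipode_one, W.antipode_comul, ← W.map_εs_comul_one]
  refine ⟨TensorProduct.rid ℂ B (map LinearMap.id (φ ∘ₗ W.S) (W.Δ 1)), ?_⟩
  rw [W.εt_eq_lid_map]
  conv_lhs => rw [hΔ]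
  exact h _

theorem map_antipode_id_mul_tmul_one (t : B ⊗[ℂ] B) (y : B) :
    map W.S LinearMap.id (t * (y ⊗ₜ (1 : B))) = (W.S y ⊗ₜ (1 : B)) * map W.S LinearMap.id t := by
  induction t with
  | zero => simp
  | tmul => simp [W.antipode_mul]
  | add _ _ h₁ h₂ => simp_all [add_mul, mul_add]

theorem map_antipode_id_mul_one_tmul (t : B ⊗[ℂ] B) (r : B) :
    map W.S LinearMap.id (t * ((1 : B) ⊗ₜ r)) = map W.S LinearMap.id t * ((1 : B) ⊗ₜ r) := by
  induction t with
  | zero => simp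
  | tmul => simp
  | add _ _ h₁ h₂ => simp_all [add_mul]

theorem tmul_one_mul_map_antipode_comul_one {z : B} (hz : z ∈ W.Bt) :
    (z ⊗ₜ (1 : B)) * map W.S LinearMap.id (W.Δ 1) =
      map W.S LinearMap.id (W.Δ 1) * ((1 : B) ⊗ₜ z) := by
  obtain ⟨c, rfl⟩ := W.mem_Bt_iff.1 hz
  obtain ⟨d, hd⟩ := W.exists_εt_eq_antipode_εs c
  rw [hd, ← W.map_antipode_id_mul_tmul_one, W.comul_one_mul_εs_tmul_one,
    W.map_antipode_id_mul_one_tmul]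

theorem ad_eq_sandwich (b x : B) : W.ad b x = sandwich b (map W.S LinearMap.id (W.Δ x)) := by
  rw [ad, sandwich, LinearMap.comp_apply, map_map, LinearMap.id_comp, LinearMap.comp_id]

theorem ad_mul (b x y : B) : W.ad b (x * y) = W.ad (W.ad b x) y := by
  simp only [ad, W.comul_mul]
  induction W.Δ y with
  | zero => simp
  | tmul =>
    induction W.Δ x with
    | zero => simp
    | tmul => simp [W.antipode_mul, mul_assoc]
    | add _ _ h₁ h₂ => simp_all [add_mul, mul_add]
  | add _ _ h₁ h₂ => simp_all [mul_add]

theorem ad_mem_centralizer_Bt (b x : B) :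
    W.ad b x ∈ Subalgebra.centralizer ℂ (W.Bt : Set B) := by
  rw [Subalgebra.mem_centralizer_iff]
  intro z hz
  rw [← mul_one x, W.ad_mul, W.ad_eq_sandwich _ 1, mul_sandwich,
    W.tmul_one_mul_map_antipode_comul_one hz, ← sandwich_mul]

theorem mul'_map_antipode_comul_one : LinearMap.mul' ℂ B (map W.S LinearMap.id (W.Δ 1)) = 1 :=
  (W.antipode_right 1).trans W.εs_one

theorem ad_one_of_mem_centralizer {b : B} (hb : b ∈ Subalgebra.centralizer ℂ (W.Bt : Set B)) :
    W.ad b 1 = b := by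
  have h : ∀ t : B ⊗[ℂ] B, sandwich b (map W.S LinearMap.id (map LinearMap.id W.εtₗ t)) =
      LinearMap.mul' ℂ B (map W.S LinearMap.id (map LinearMap.id W.εtₗ t)) * b := by
    intro t
    induction t with
    | zero => simp
    | tmul u v =>
      have hv := (Subalgebra.mem_centralizer_iff ℂ).1 hb _ (W.mem_Bt_iff.2 ⟨v, rfl⟩)
      simp [εtₗ_apply, hv, mul_assoc]
    | add _ _ h₁ h₂ => simp_all [add_mul]
  rw [W.ad_eq_sandwich, ← W.map_εt_comul_one, h, W.map_εt_comul_one,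
    W.mul'_map_antipode_comul_one, one_mul]

theorem isCoideal_centralizer_Bt :
    W.IsCoideal (Subalgebra.centralizer ℂ (W.Bt : Set B)).toSubmodule :=
  ⟨Subalgebra.one_mem _, fun _ ha _ hb => Subalgebra.mul_mem _ ha hb,
    fun _ ha => Set.star_mem_centralizer' (fun _ hz => W.star_mem_Bt hz) ha,
    fun _ ha => TensorProduct.mem_span_tmul_centralizer _ _
      fun _ hz => W.tmul_one_mul_comul_of_mem_centralizer ha hz⟩

theorem span_ad_le_centralizer_Bt (J : Submodule ℂ B) :
    Submodule.span ℂ {y : B | ∃ b ∈ J, ∃ x : B, y = W.ad b x} ≤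
      (Subalgebra.centralizer ℂ (W.Bt : Set B)).toSubmodule :=
  Submodule.span_le.2 fun _ ⟨b, _, x, hy⟩ => hy ▸ W.ad_mem_centralizer_Bt b x

theorem isInvariant_centralizer_Bt :
    W.IsInvariant (Subalgebra.centralizer ℂ (W.Bt : Set B)).toSubmodule :=
  le_antisymm (W.span_ad_le_centralizer_Bt _)
    fun b hb => Submodule.subset_span ⟨b, hb, 1, (W.ad_one_of_mem_centralizer hb).symm⟩

theorem le_centralizer_Bt_of_isInvariant {J : Submodule ℂ B} (hJ : W.IsInvariant J) :
    J ≤ (Subalgebra.centralizer ℂ (W.Bt : Set B)).toSubmodule :=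
  hJ ▸ W.span_ad_le_centralizer_Bt J

end WHA

/-- the commutant of `B_t` is an invariant coideal, and it is the greatest one. -/
theorem commutant_Bt_greatest_invariant_coideal {B : Type} [NormedRing B] [StarRing B]
    [CStarRing B] [NormedAlgebra ℂ B] [StarModule ℂ B] [FiniteDimensional ℂ B] (W : WHA B) :
    (∃ I : Submodule ℂ B, (I : Set B) = {b : B | ∀ z ∈ W.Bt, b * z = z * b} ∧
      W.IsCoideal I ∧ W.IsInvariant I) ∧
    ∀ J : Submodule ℂ B, W.IsCoideal J → W.IsInvariant J →
      (J : Set B) ⊆ {b : B | ∀ z ∈ W.Bt, b * z = z * b} := by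
  have hC : ((Subalgebra.centralizer ℂ (W.Bt : Set B)).toSubmodule : Set B) =
      {b : B | ∀ z ∈ W.Bt, b * z = z * b} := by
    ext b
    simp [Set.mem_centralizer_iff, eq_comm]
  refine ⟨⟨_, hC, W.isCoideal_centralizer_Bt, W.isInvariant_centralizer_Bt⟩, fun J _ hJ => ?_⟩
  rw [← hC]
  exact W.le_centralizer_Bt_of_isInvariant hJ

end
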